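/- Let X be a complex Banach space, 𝕏 a compact topological space, 𝒯 : 𝕏 → L(X) a continuous family, and (𝒯ₙ)ₙ a sequence of continuous families converging to 𝒯 in the sup norm sup_{x∈𝕏} ‖(𝒯ₙ)ₓ − 𝒯ₓ‖ → 0. If the Fredholm spectra converge in the Kuratowski sense, lim_{n→∞} σ_e(𝒯ₙ) = σ_e(𝒯), then the Weyl spectra converge in the Kuratowski sense: lim_{n→∞} σ_W(𝒯ₙ) = σ_W(𝒯). -/

import Mathlib

/-- A bounded operator `T : X → X` is Fredholm if its kernel is finite-dimensional and
its range is closed and of finite codimension. -/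
def IsFredholm {X : Type*} [NormedAddCommGroup X] [NormedSpace ℂ X] (T : X →L[ℂ] X) : Prop :=
  FiniteDimensional ℂ (LinearMap.ker (T : X →ₗ[ℂ] X)) ∧ IsClosed (LinearMap.range (T : X →ₗ[ℂ] X) : Set X) ∧
    FiniteDimensional ℂ (X ⧸ LinearMap.range (T : X →ₗ[ℂ] X))

/-- The Fredholm index `ind T = dim ker T - dim (X / ran T)`. -/
noncomputable def fredholmIndex {X : Type*} [NormedAddCommGroup X] [NormedSpace ℂ X]
    (T : X →L[ℂ] X) : ℤ :=
  (Module.finrank ℂ (LinearMap.ker (T : X →ₗ[ℂ] X)) : ℤ) - (Module.finrank ℂ (X ⧸ LinearMap.range (T : X →ₗ[ℂ] X)) : ℤ)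

/-- `T` is a Weyl operator if it is Fredholm of index `0`. -/
def IsWeyl {X : Type*} [NormedAddCommGroup X] [NormedSpace ℂ X] (T : X →L[ℂ] X) : Prop :=
  IsFredholm T ∧ fredholmIndex T = 0

/-- The Weyl spectrum of a family of operators:
`σ_W(𝒯) = {λ ∈ ℂ : ∃ x, 𝒯 x - λ • I is not Weyl}`. -/
def weylSpectrum {X : Type*} [NormedAddCommGroup X] [NormedSpace ℂ X]
    {𝕏 : Type*} (𝒯 : 𝕏 → X →L[ℂ] X) : Set ℂ :=
  {z | ∃ x, ¬ IsWeyl (𝒯 x - z • 1)}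

/-- Kuratowski lower limit of a sequence of subsets of `ℂ`. -/
def setLimInf (A : ℕ → Set ℂ) : Set ℂ :=
  {z | ∀ ε > 0, ∃ N : ℕ, ∀ n ≥ N, ∃ μ ∈ A n, ‖μ - z‖ < ε}

/-- Kuratowski upper limit of a sequence of subsets of `ℂ`. -/
def setLimSup (A : ℕ → Set ℂ) : Set ℂ :=
  {z | ∀ ε > 0, ∀ N : ℕ, ∃ n ≥ N, ∃ μ ∈ A n, ‖μ - z‖ < ε}

/-- Kuratowski convergence of a sequence of subsets of `ℂ` to a set `S`. -/
def KuratowskiLim (A : ℕ → Set ℂ) (S : Set ℂ) : Prop :=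
  setLimInf A = S ∧ setLimSup A = S

/-- The Fredholm (essential) spectrum of a family of operators:
`σ_e(𝒯) = {λ ∈ ℂ : ∃ x, 𝒯 x - λ • I is not Fredholm}`. -/
def fredholmSpectrum {X : Type*} [NormedAddCommGroup X] [NormedSpace ℂ X]
    {𝕏 : Type*} (𝒯 : 𝕏 → X →L[ℂ] X) : Set ℂ :=
  {z | ∃ x, ¬ IsFredholm (𝒯 x - z • 1)}

/-!
Fredholmness and the index are locally constant. If `T` is Fredholm, split its domain as
`M ⊕ ker T` and its codomain as `range T ⊕ K`. In these splittings the upper-left corner of `T`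
is invertible, hence so is that of every nearby `S`, and eliminating it (a Schur complement)
shows that `S` is Fredholm of index `dim ker T - dim K = ind T`. In particular the Weyl
operators form an open set.

Lower limit: a point `z ∈ σ_W(𝒯)` either lies in `σ_e(𝒯) ⊆ liminf σ_e(𝒯ₙ) ⊆ liminf σ_W(𝒯ₙ)`,
or some `𝒯ₓ - z` is Fredholm of nonzero index, and then so is `(𝒯ₙ)ₓ - z` for all large `n`.
Upper limit: if `z ∉ σ_W(𝒯)`, the compact set `{𝒯ₓ - z}` of Weyl operators has a uniform
neighbourhood of Weyl operators, which contains `(𝒯ₙ)ₓ - μ` for every `x`, every `μ` near `z`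
and every large `n`.
-/

open Filter Topology Module

section FredholmMap

variable {𝕜 E F G H : Type*} [NontriviallyNormedField 𝕜]
  [NormedAddCommGroup E] [NormedSpace 𝕜 E] [NormedAddCommGroup F] [NormedSpace 𝕜 F]
  [NormedAddCommGroup G] [NormedSpace 𝕜 G] [NormedAddCommGroup H] [NormedSpace 𝕜 H]

def IsFredholmMap (T : E →L[𝕜] F) : Prop :=
  FiniteDimensional 𝕜 T.ker ∧ IsClosed (T.range : Set F) ∧ FiniteDimensional 𝕜 (F ⧸ T.range)

noncomputable def fredholmIndexMap (T : E →L[𝕜] F) : ℤ :=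
  finrank 𝕜 T.ker - finrank 𝕜 (F ⧸ T.range)

theorem ker_equiv_comp (Ψ : F ≃L[𝕜] G) (T : E →L[𝕜] F) :
    ((Ψ : F →L[𝕜] G) ∘L T).ker = T.ker := by
  ext; simp

theorem range_equiv_comp (Ψ : F ≃L[𝕜] G) (T : E →L[𝕜] F) :
    ((Ψ : F →L[𝕜] G) ∘L T).range = T.range.map (Ψ.toLinearEquiv : F →ₗ[𝕜] G) :=
  LinearMap.range_comp _ _

theorem ker_comp_equiv (T : F →L[𝕜] G) (Φ : E ≃L[𝕜] F) :
    (T ∘L (Φ : E →L[𝕜] F)).ker = T.ker.map (Φ.symm.toLinearEquiv : F →ₗ[𝕜] E) := by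
  ext; simp

theorem range_comp_equiv (T : F →L[𝕜] G) (Φ : E ≃L[𝕜] F) :
    (T ∘L (Φ : E →L[𝕜] F)).range = T.range :=
  LinearMap.range_comp_of_range_eq_top _ (LinearEquiv.range Φ.toLinearEquiv)

theorem isFredholmMap_equiv_comp_iff (Ψ : F ≃L[𝕜] G) (T : E →L[𝕜] F) :
    IsFredholmMap ((Ψ : F →L[𝕜] G) ∘L T) ↔ IsFredholmMap T := by
  have hclosed : IsClosed ((T.range.map (Ψ.toLinearEquiv : F →ₗ[𝕜] G) : Submodule 𝕜 G) : Set G) ↔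
      IsClosed (T.range : Set F) :=
    Ψ.toHomeomorph.isClosed_image
  rw [IsFredholmMap, IsFredholmMap, ker_equiv_comp, range_equiv_comp, hclosed, FiniteDimensional,
    FiniteDimensional, ← Module.Finite.equiv_iff (Submodule.Quotient.equiv _ _ Ψ.toLinearEquiv rfl)]

theorem fredholmIndexMap_equiv_comp (Ψ : F ≃L[𝕜] G) (T : E →L[𝕜] F) :
    fredholmIndexMap ((Ψ : F →L[𝕜] G) ∘L T) = fredholmIndexMap T := by
  rw [fredholmIndexMap, fredholmIndexMap, ker_equiv_comp, range_equiv_comp,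
    ← (Submodule.Quotient.equiv _ _ Ψ.toLinearEquiv rfl).finrank_eq]

theorem isFredholmMap_comp_equiv_iff (T : F →L[𝕜] G) (Φ : E ≃L[𝕜] F) :
    IsFredholmMap (T ∘L (Φ : E →L[𝕜] F)) ↔ IsFredholmMap T := by
  rw [IsFredholmMap, IsFredholmMap, ker_comp_equiv, range_comp_equiv, FiniteDimensional,
    ← Module.Finite.equiv_iff (Φ.symm.toLinearEquiv.submoduleMap T.ker)]

theorem fredholmIndexMap_comp_equiv (T : F →L[𝕜] G) (Φ : E ≃L[𝕜] F) :
    fredholmIndexMap (T ∘L (Φ : E →L[𝕜] F)) = fredholmIndexMap T := by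
  rw [fredholmIndexMap, fredholmIndexMap, ker_comp_equiv, range_comp_equiv,
    LinearEquiv.finrank_map_eq Φ.symm.toLinearEquiv]

theorem fredholmIndexMap_of_finiteDimensional [FiniteDimensional 𝕜 E] [FiniteDimensional 𝕜 F]
    (T : E →L[𝕜] F) : fredholmIndexMap T = finrank 𝕜 E - finrank 𝕜 F := by
  have hrank := (T : E →ₗ[𝕜] F).finrank_range_add_finrank_ker
  have hcorank := T.range.finrank_quotient_add_finrank
  rw [fredholmIndexMap]
  omega

theorem ker_prodMap_equiv (A : E ≃L[𝕜] F) (D : G →L[𝕜] H) :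
    ((A : E →L[𝕜] F).prodMap D).ker = D.ker.map (LinearMap.inr 𝕜 E G) := by
  rw [ContinuousLinearMap.coe_prodMap, LinearMap.ker_prodMap, Submodule.map_inr]
  simp

theorem range_prodMap_equiv (A : E ≃L[𝕜] F) (D : G →L[𝕜] H) :
    ((A : E →L[𝕜] F).prodMap D).range = D.range.comap (LinearMap.snd 𝕜 F H) := by
  rw [ContinuousLinearMap.coe_prodMap, LinearMap.range_prodMap, Submodule.comap_snd]
  simp

noncomputable def quotientComapSndEquiv (p : Submodule 𝕜 H) :
    ((F × H) ⧸ p.comap (LinearMap.snd 𝕜 F H)) ≃ₗ[𝕜] H ⧸ p :=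
  (Submodule.quotEquivOfEq _ _ (by rw [LinearMap.ker_comp, Submodule.ker_mkQ])).trans
    ((p.mkQ ∘ₗ LinearMap.snd 𝕜 F H).quotKerEquivOfSurjective
      (p.mkQ_surjective.comp LinearMap.snd_surjective))

theorem isFredholmMap_prodMap [CompleteSpace 𝕜] [FiniteDimensional 𝕜 G] [FiniteDimensional 𝕜 H]
    (A : E ≃L[𝕜] F) (D : G →L[𝕜] H) : IsFredholmMap ((A : E →L[𝕜] F).prodMap D) := by
  rw [IsFredholmMap, ker_prodMap_equiv, range_prodMap_equiv]
  refine ⟨(Submodule.equivMapOfInjective _ LinearMap.inr_injective D.ker).finiteDimensional,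
    D.range.closed_of_finiteDimensional.preimage continuous_snd,
    (quotientComapSndEquiv (F := F) D.range).symm.finiteDimensional⟩

theorem fredholmIndexMap_prodMap (A : E ≃L[𝕜] F) (D : G →L[𝕜] H) :
    fredholmIndexMap ((A : E →L[𝕜] F).prodMap D) = fredholmIndexMap D := by
  rw [fredholmIndexMap, fredholmIndexMap, ker_prodMap_equiv, range_prodMap_equiv,
    (quotientComapSndEquiv (F := F) D.range).finrank_eq,
    (Submodule.equivMapOfInjective _ (LinearMap.inr_injective (R := 𝕜) (M := E)) D.ker).finrank_eq]

open ContinuousLinearMap in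
theorem exists_eq_equiv_comp_prodMap_comp_equiv (T : E × G →L[𝕜] F × H) (A : E ≃L[𝕜] F)
    (hA : fst 𝕜 F H ∘L T ∘L inl 𝕜 E G = A) :
    ∃ (U : (F × H) ≃L[𝕜] F × H) (V : (E × G) ≃L[𝕜] E × G) (D : G →L[𝕜] H),
      T = (U : F × H →L[𝕜] F × H) ∘L (A : E →L[𝕜] F).prodMap D ∘L (V : E × G →L[𝕜] E × G) := by
  let B := fst 𝕜 F H ∘L T ∘L inr 𝕜 E G
  let C := snd 𝕜 F H ∘L T ∘L inl 𝕜 E G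
  let D₀ := snd 𝕜 F H ∘L T ∘L inr 𝕜 E G
  let U := ContinuousLinearEquiv.skewProd (.refl 𝕜 F) (.refl 𝕜 H) (C ∘L (A.symm : F →L[𝕜] E))
  let V := (ContinuousLinearEquiv.prodComm 𝕜 E G).trans <|
    (ContinuousLinearEquiv.skewProd (.refl 𝕜 G) (.refl 𝕜 E) ((A.symm : F →L[𝕜] E) ∘L B)).trans
      (ContinuousLinearEquiv.prodComm 𝕜 G E)
  -- `[[A, B], [C, D₀]] = [[1, 0], [C A⁻¹, 1]] [[A, 0], [0, D₀ - C A⁻¹ B]] [[1, A⁻¹ B], [0, 1]]`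
  refine ⟨U, V, D₀ - C ∘L (A.symm : F →L[𝕜] E) ∘L B, ?_⟩
  have hA' : ∀ m, (T (m, 0)).1 = A m := DFunLike.congr_fun hA
  have hT : ∀ m n, T (m, n) = T (m, 0) + T (0, n) := fun m n => by rw [← map_add]; simp
  have hT₀ : ∀ m m', T (m + m', 0) = T (m, 0) + T (m', 0) := fun m m' => by rw [← map_add]; simp
  refine ContinuousLinearMap.ext fun ⟨m, n⟩ => ?_
  simp [U, V, B, C, D₀, hT₀, hT m n, Prod.ext_iff, hA', add_comm]

theorem isFredholmMap_prod_of_corner [CompleteSpace 𝕜] [FiniteDimensional 𝕜 G]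
    [FiniteDimensional 𝕜 H] (T : E × G →L[𝕜] F × H) (A : E ≃L[𝕜] F)
    (hA : ContinuousLinearMap.fst 𝕜 F H ∘L T ∘L ContinuousLinearMap.inl 𝕜 E G = A) :
    IsFredholmMap T ∧ fredholmIndexMap T = finrank 𝕜 G - finrank 𝕜 H := by
  obtain ⟨U, V, D, rfl⟩ := exists_eq_equiv_comp_prodMap_comp_equiv T A hA
  rw [isFredholmMap_equiv_comp_iff, isFredholmMap_comp_equiv_iff, fredholmIndexMap_equiv_comp,
    fredholmIndexMap_comp_equiv, fredholmIndexMap_prodMap, fredholmIndexMap_of_finiteDimensional]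
  exact ⟨isFredholmMap_prodMap A D, rfl⟩

open ContinuousLinearMap in
theorem isFredholmMap_of_corner [CompleteSpace 𝕜] [FiniteDimensional 𝕜 G]
    [FiniteDimensional 𝕜 H] {X Y : Type*} [NormedAddCommGroup X] [NormedSpace 𝕜 X]
    [NormedAddCommGroup Y] [NormedSpace 𝕜 Y]
    (e : (E × G) ≃L[𝕜] X) (f : (F × H) ≃L[𝕜] Y) (S : X →L[𝕜] Y) (A : E ≃L[𝕜] F)
    (hA : fst 𝕜 F H ∘L ((f.symm : Y →L[𝕜] F × H) ∘L S ∘L (e : E × G →L[𝕜] X)) ∘L inl 𝕜 E G = A) :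
    IsFredholmMap S ∧ fredholmIndexMap S = finrank 𝕜 G - finrank 𝕜 H := by
  have hS : S = (f : F × H →L[𝕜] Y) ∘L ((f.symm : Y →L[𝕜] F × H) ∘L S ∘L
      (e : E × G →L[𝕜] X)) ∘L (e.symm : X →L[𝕜] E × G) := by
    ext; simp
  rw [hS, isFredholmMap_equiv_comp_iff, isFredholmMap_comp_equiv_iff,
    fredholmIndexMap_equiv_comp, fredholmIndexMap_comp_equiv]
  exact isFredholmMap_prod_of_corner _ A hA

end FredholmMap

section Stability

variable {𝕜 E F : Type*} [RCLike 𝕜]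
  [NormedAddCommGroup E] [NormedSpace 𝕜 E] [CompleteSpace E]
  [NormedAddCommGroup F] [NormedSpace 𝕜 F] [CompleteSpace F]

theorem exists_equiv_range_of_isCompl_ker (T : E →L[𝕜] F) {M : Submodule 𝕜 E} (hM : IsCompl T.ker M)
    (hM_closed : IsClosed (M : Set E)) (hT : IsClosed (T.range : Set F)) :
    ∃ A : M ≃L[𝕜] T.range, ∀ m : M, (A m : F) = T m := by
  have := hM_closed.completeSpace_coe
  have := hT.completeSpace_coe
  let A₀ : M →L[𝕜] T.range := (T ∘L M.subtypeL).codRestrict T.range fun m => ⟨m, rfl⟩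
  have hbij : Function.Bijective A₀ := by
    convert ((T.ker.quotientEquivOfIsCompl M hM).symm.trans
      (T : E →ₗ[𝕜] F).quotKerEquivRange).bijective
    ext m
    rfl
  exact ⟨.ofBijective A₀ (LinearMap.ker_eq_bot.mpr hbij.1) (LinearMap.range_eq_top.mpr hbij.2),
    fun m => rfl⟩

open ContinuousLinearMap in
theorem IsFredholmMap.eventually_isFredholmMap_and_index_eq {T : E →L[𝕜] F}
    (hT : IsFredholmMap T) :
    ∀ᶠ S in 𝓝 T, IsFredholmMap S ∧ fredholmIndexMap S = fredholmIndexMap T := by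
  obtain ⟨hker, hclosed, hcoker⟩ := hT
  obtain ⟨M, hM⟩ := (Submodule.ClosedComplemented.of_finiteDimensional T.ker).exists_isTopCompl
  obtain ⟨K, hK⟩ :=
    (Submodule.ClosedComplemented.of_finiteDimensional_quotient hclosed).exists_isTopCompl
  have : FiniteDimensional 𝕜 K :=
    (Submodule.quotientEquivOfIsTopCompl _ _ hK).toLinearEquiv.finiteDimensional
  let e := Submodule.prodEquivOfIsTopCompl M T.ker hM.symm
  let f := Submodule.prodEquivOfIsTopCompl T.range K hK
  let corner : (E →L[𝕜] F) → M →L[𝕜] T.range := fun S =>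
    fst 𝕜 T.range K ∘L ((f.symm : F →L[𝕜] T.range × K) ∘L S ∘L (e : M × T.ker →L[𝕜] E)) ∘L
      inl 𝕜 M T.ker
  obtain ⟨AT, hAT⟩ := exists_equiv_range_of_isCompl_ker T hM.isCompl hM.isClosed' hclosed
  have hcornerT : corner T = AT := by
    ext m
    simp [corner, e, f, hAT]
  have : CompleteSpace M := hM.isClosed'.completeSpace_coe
  have hnhds : Set.range ((↑) : (M ≃L[𝕜] T.range) → M →L[𝕜] T.range) ∈ 𝓝 (corner T) := by
    rw [hcornerT]
    exact ContinuousLinearEquiv.nhds AT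
  have hcont : Continuous corner := by fun_prop
  filter_upwards [hcont.continuousAt.preimage_mem_nhds hnhds] with S ⟨A, hA⟩
  obtain ⟨hS, hSind⟩ := isFredholmMap_of_corner e f S A hA.symm
  exact ⟨hS, hSind.trans (isFredholmMap_of_corner e f T AT hcornerT).2.symm⟩

end Stability

theorem IsFredholm.eventually_isFredholm_and_fredholmIndex_eq {X : Type*} [NormedAddCommGroup X]
    [NormedSpace ℂ X] [CompleteSpace X] {T : X →L[ℂ] X} (hT : IsFredholm T) :
    ∀ᶠ S in 𝓝 T, IsFredholm S ∧ fredholmIndex S = fredholmIndex T :=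
  IsFredholmMap.eventually_isFredholmMap_and_index_eq hT

theorem isOpen_setOf_isWeyl {X : Type*} [NormedAddCommGroup X] [NormedSpace ℂ X]
    [CompleteSpace X] : IsOpen {T : X →L[ℂ] X | IsWeyl T} :=
  isOpen_iff_mem_nhds.mpr fun _ hT =>
    hT.1.eventually_isFredholm_and_fredholmIndex_eq.mono fun _ hS => ⟨hS.1, hS.2.trans hT.2⟩

section Kuratowski

variable {A B : ℕ → Set ℂ} {S : Set ℂ} {z : ℂ}

theorem setLimInf_subset_setLimSup : setLimInf A ⊆ setLimSup A := fun z hz ε hε N => by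
  obtain ⟨N', hN'⟩ := hz ε hε
  exact ⟨max N N', le_max_left _ _, hN' _ (le_max_right _ _)⟩

theorem setLimInf_mono (h : ∀ n, A n ⊆ B n) : setLimInf A ⊆ setLimInf B := fun z hz ε hε => by
  obtain ⟨N, hN⟩ := hz ε hε
  refine ⟨N, fun n hn => ?_⟩
  obtain ⟨μ, hμ, hμz⟩ := hN n hn
  exact ⟨μ, h n hμ, hμz⟩

theorem mem_setLimInf_of_eventually_mem (h : ∀ᶠ n in atTop, z ∈ A n) : z ∈ setLimInf A :=
  fun _ hε => (eventually_atTop.mp h).imp fun _ hN n hn => ⟨z, hN n hn, by simpa using hε⟩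

theorem notMem_setLimSup_of_eventually {ε : ℝ} (hε : 0 < ε)
    (h : ∀ᶠ n in atTop, ∀ μ, ‖μ - z‖ < ε → μ ∉ A n) : z ∉ setLimSup A := fun hz => by
  obtain ⟨N, hN⟩ := eventually_atTop.mp h
  obtain ⟨n, hn, μ, hμ, hμz⟩ := hz ε hε N
  exact hN n hn μ hμz hμ

theorem kuratowskiLim_of_subset_setLimInf_of_setLimSup_subset (hinf : S ⊆ setLimInf A)
    (hsup : setLimSup A ⊆ S) : KuratowskiLim A S :=
  ⟨(setLimInf_subset_setLimSup.trans hsup).antisymm hinf,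
    hsup.antisymm (hinf.trans setLimInf_subset_setLimSup)⟩

end Kuratowski

theorem tendstoUniformly_of_tendsto_iSup_norm_sub {ι α E : Type*} [SeminormedAddCommGroup E]
    {l : Filter ι} {F : ι → α → E} {f : α → E}
    (hbdd : ∀ i, BddAbove (Set.range fun x => ‖F i x - f x‖))
    (h : Tendsto (fun i => ⨆ x, ‖F i x - f x‖) l (𝓝 0)) : TendstoUniformly F f l :=
  Metric.tendstoUniformly_iff.mpr fun ε hε => (h.eventually (gt_mem_nhds hε)).mono fun i hi x => by
    rw [dist_comm, dist_eq_norm]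
    exact (le_ciSup (hbdd i) x).trans_lt hi

section Spectra

variable {X : Type*} [NormedAddCommGroup X] [NormedSpace ℂ X] {𝕏 : Type*}

theorem fredholmSpectrum_subset_weylSpectrum (𝒯 : 𝕏 → X →L[ℂ] X) :
    fredholmSpectrum 𝒯 ⊆ weylSpectrum 𝒯 :=
  fun _ ⟨x, hx⟩ => ⟨x, fun hW => hx hW.1⟩

theorem weylSpectrum_subset_setLimInf [CompleteSpace X] {𝒯 : 𝕏 → X →L[ℂ] X}
    {𝒯n : ℕ → 𝕏 → X →L[ℂ] X} (h : ∀ x, Tendsto (fun n => 𝒯n n x) atTop (𝓝 (𝒯 x)))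
    (he : fredholmSpectrum 𝒯 ⊆ setLimInf fun n => fredholmSpectrum (𝒯n n)) :
    weylSpectrum 𝒯 ⊆ setLimInf fun n => weylSpectrum (𝒯n n) := by
  rintro z ⟨x, hx⟩
  by_cases hF : IsFredholm (𝒯 x - z • 1)
  · have hind : fredholmIndex (𝒯 x - z • 1) ≠ 0 := fun h0 => hx ⟨hF, h0⟩
    refine mem_setLimInf_of_eventually_mem <|
      ((h x).sub_const (z • 1)).eventually hF.eventually_isFredholm_and_fredholmIndex_eq |>.mono
        fun n hn => ⟨x, fun hW => hind (hn.2 ▸ hW.2)⟩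
  · exact setLimInf_mono (fun n => fredholmSpectrum_subset_weylSpectrum _) (he ⟨x, hF⟩)

theorem setLimSup_weylSpectrum_subset [CompleteSpace X] [TopologicalSpace 𝕏] [CompactSpace 𝕏]
    {𝒯 : 𝕏 → X →L[ℂ] X} (h𝒯 : Continuous 𝒯) {𝒯n : ℕ → 𝕏 → X →L[ℂ] X}
    (h : TendstoUniformly 𝒯n 𝒯 atTop) :
    setLimSup (fun n => weylSpectrum (𝒯n n)) ⊆ weylSpectrum 𝒯 := by
  intro z
  contrapose
  intro hz
  have hWeyl : Set.range (fun x => 𝒯 x - z • 1) ⊆ {T | IsWeyl T} := by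
    rintro _ ⟨x, rfl⟩
    by_contra hx
    exact hz ⟨x, hx⟩
  have hcompact : IsCompact (Set.range fun x => 𝒯 x - z • 1) :=
    isCompact_range (h𝒯.sub continuous_const)
  obtain ⟨δ, hδ, hthick⟩ := hcompact.exists_thickening_subset_open isOpen_setOf_isWeyl hWeyl
  refine notMem_setLimSup_of_eventually (half_pos hδ) <|
    (Metric.tendstoUniformly_iff.mp h _ (half_pos hδ)).mono fun n hn μ hμ ⟨x, hx⟩ => hx <|
      hthick <| Metric.mem_thickening_iff.mpr ⟨𝒯 x - z • 1, ⟨x, rfl⟩, ?_⟩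
  have hshift : dist (μ • (1 : X →L[ℂ] X)) (z • 1) ≤ ‖μ - z‖ := by
    rw [dist_eq_norm, ← sub_smul]
    exact (norm_smul_le _ _).trans
      (mul_le_of_le_one_right (norm_nonneg _) ContinuousLinearMap.norm_id_le)
  calc dist (𝒯n n x - μ • 1) (𝒯 x - z • 1) ≤ dist (𝒯n n x) (𝒯 x) + dist (μ • 1) (z • 1) :=
        dist_sub_sub_le _ _ _ _
    _ < δ / 2 + δ / 2 := add_lt_add_of_lt_of_le (dist_comm (𝒯 x) _ ▸ hn x) (hshift.trans hμ.le)
    _ = δ := add_halves δ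

end Spectra

theorem weylSpectrum_continuity_of_fredholmSpectrum_continuity
    {X : Type*} [NormedAddCommGroup X] [NormedSpace ℂ X] [CompleteSpace X]
    {𝕏 : Type*} [TopologicalSpace 𝕏] [CompactSpace 𝕏]
    (𝒯 : 𝕏 → X →L[ℂ] X) (h𝒯cont : Continuous 𝒯)
    (𝒯n : ℕ → 𝕏 → X →L[ℂ] X) (h𝒯ncont : ∀ n, Continuous (𝒯n n))
    (hconv : Filter.Tendsto (fun n => ⨆ x, ‖𝒯n n x - 𝒯 x‖) Filter.atTop (nhds 0))
    (he : KuratowskiLim (fun n => fredholmSpectrum (𝒯n n)) (fredholmSpectrum 𝒯)) :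
    KuratowskiLim (fun n => weylSpectrum (𝒯n n)) (weylSpectrum 𝒯) := by
  have hunif : TendstoUniformly 𝒯n 𝒯 atTop := tendstoUniformly_of_tendsto_iSup_norm_sub
    (fun n => (isCompact_range ((h𝒯ncont n).sub h𝒯cont).norm).bddAbove) hconv
  exact kuratowskiLim_of_subset_setLimInf_of_setLimSup_subset
    (weylSpectrum_subset_setLimInf hunif.tendsto_at he.1.superset)
    (setLimSup_weylSpectrum_subset h𝒯cont hunif)
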